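/- arXiv:1610.09408 — 5 statements merged into one kernel-verified Lean document; each statement's English description precedes it below -/
import Mathlib

section
/- For every k ∈ ℤ, the adapted basis elements satisfy the recursion Ψ⁺_{k+1} = R₊ Ψ⁺_k. -/
open Polynomial

/-- The Euler operator `D = x d/dx` on formal Laurent series: `(D f)_n = n • f_n`. -/
noncomputable def eulerD (R : Type*) [CommRing R] : Module.End R (LaurentSeries R) where
  toFun f :=
    { coeff := fun n => n • f.coeff n
      isPWO_support' := f.isPWO_support'.mono (fun n hn => by
        simp only [Function.mem_support, ne_eq] at hn ⊢
        exact fun h => hn (by rw [h, smul_zero])) }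
  map_add' f g := by
    ext n
    simp [smul_add]
  map_smul' r f := by
    ext n
    simp only [HahnSeries.coeff_smul, RingHom.id_apply, zsmul_eq_mul, smul_eq_mul]
    ring

/-- Multiplication by a fixed Laurent series `u`, as an `R`-linear endomorphism. -/
noncomputable def mulOp (R : Type*) [CommRing R] (u : LaurentSeries R) :
    Module.End R (LaurentSeries R) where
  toFun f := u * f
  map_add' f g := mul_add u f g
  map_smul' r f := by
    simp only [RingHom.id_apply]
    rw [← HahnSeries.C_mul_eq_smul, ← HahnSeries.C_mul_eq_smul, mul_left_comm]

/-- Multiplication by `x` on formal Laurent series. -/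
noncomputable def mulX (R : Type*) [CommRing R] : Module.End R (LaurentSeries R) :=
  mulOp R (HahnSeries.single (1 : ℤ) (1 : R))

/-- The recursion operator `R₊ = γ x G(β D)`. -/
noncomputable def Rplus (R : Type*) [CommRing R] (β γ : R) (G : R[X]) :
    Module.End R (LaurentSeries R) :=
  γ • (mulX R ∘ₗ Polynomial.aeval (β • eulerD R) G)

/-- The recursion operator `R₋ = γ x G(−β D)`. -/
noncomputable def Rminus (R : Type*) [CommRing R] (β γ : R) (G : R[X]) :
    Module.End R (LaurentSeries R) :=
  γ • (mulX R ∘ₗ Polynomial.aeval ((-β) • eulerD R) G)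

section EulerOperator

variable {R : Type*} [CommRing R]

theorem coeff_eulerD (f : LaurentSeries R) (n : ℤ) :
    (eulerD R f).coeff n = n * f.coeff n :=
  zsmul_eq_mul _ _

theorem coeff_smul_eulerD_pow (β : R) (i : ℕ) (f : LaurentSeries R) (n : ℤ) :
    (((β • eulerD R) ^ i) f).coeff n = ((n : R) * β) ^ i * f.coeff n := by
  induction i generalizing f with
  | zero => simp
  | succ i ih =>
    rw [pow_succ, Module.End.mul_apply, ih, LinearMap.smul_apply, HahnSeries.coeff_smul,
      coeff_eulerD, smul_eq_mul]
    ring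

theorem coeff_aeval_smul_eulerD (β : R) (G : R[X]) (f : LaurentSeries R) (n : ℤ) :
    ((aeval (β • eulerD R) G) f).coeff n = G.eval ((n : R) * β) * f.coeff n := by
  induction G using Polynomial.induction_on' with
  | add p q hp hq =>
    rw [map_add, LinearMap.add_apply, HahnSeries.coeff_add, hp, hq, eval_add, add_mul]
  | monomial i r =>
    rw [aeval_monomial, Module.End.mul_apply, Module.algebraMap_end_apply,
      HahnSeries.coeff_smul, coeff_smul_eulerD_pow, eval_monomial, smul_eq_mul, mul_assoc]

theorem coeff_mulX (f : LaurentSeries R) (n : ℤ) :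
    (mulX R f).coeff n = f.coeff (n - 1) := by
  change (HahnSeries.single (1 : ℤ) (1 : R) * f).coeff n = _
  rw [← sub_add_cancel n 1, HahnSeries.coeff_single_mul_add, one_mul, add_sub_cancel_right]

theorem coeff_Rplus (β γ : R) (G : R[X]) (f : LaurentSeries R) (n : ℤ) :
    (Rplus R β γ G f).coeff n = γ * G.eval (((n : R) - 1) * β) * f.coeff (n - 1) := by
  rw [Rplus, LinearMap.smul_apply, HahnSeries.coeff_smul, LinearMap.comp_apply, coeff_mulX,
    coeff_aeval_smul_eulerD, smul_eq_mul, Int.cast_sub, Int.cast_one, mul_assoc]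

end EulerOperator

theorem adapted_basis_plus_recursion_general (R : Type*) [CommRing R] (β γ : R) (G : R[X])
    (ρ : ℤ → Rˣ)
    (hρ : ∀ n : ℤ, (ρ n : R) = γ * G.eval ((n : R) * β) * (ρ (n - 1) : R))
    (h : ℤ → R)
    (Ψp : ℤ → LaurentSeries R)
    (hΨ : ∀ k n : ℤ, (Ψp k).coeff n = γ * (ρ (n - 1) : R) * h (n - k)) :
    ∀ k : ℤ, Ψp (k + 1) = Rplus R β γ G (Ψp k) := by
  intro k
  ext n
  rw [coeff_Rplus, hΨ, hΨ, hρ (n - 1), show n - (k + 1) = n - 1 - k by ring, Int.cast_sub,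
    Int.cast_one]
  ring

/-- the adapted basis elements `Ψ⁺_k`, with coefficients
`(Ψ⁺_k)_n = γ ρ_{n−1} h_{n−k}`, satisfy the recursion `Ψ⁺_{k+1} = R₊ Ψ⁺_k`. -/
theorem adapted_basis_plus_recursion (R : Type*) [CommRing R] (β γ : R) (G : R[X])
    (hG : G.coeff 0 = 1)
    (ρ : ℤ → Rˣ) (hρ0 : ρ 0 = 1)
    (hρ : ∀ n : ℤ, (ρ n : R) = γ * G.eval ((n : R) * β) * (ρ (n - 1) : R))
    (L : ℕ) (hL : 1 ≤ L) (s : ℕ → R)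
    (h : ℤ → R) (h0 : h 0 = 1) (hneg : ∀ n : ℤ, n < 0 → h n = 0)
    (hrec : ∀ n : ℤ, 1 ≤ n →
      β * (n : R) * h n = ∑ k ∈ Finset.Icc 1 L, (k : R) * s k * h (n - (k : ℤ)))
    (Ψp : ℤ → LaurentSeries R)
    (hΨ : ∀ k n : ℤ, (Ψp k).coeff n = γ * (ρ (n - 1) : R) * h (n - k)) :
    ∀ k : ℤ, Ψp (k + 1) = Rplus R β γ G (Ψp k) :=
  adapted_basis_plus_recursion_general R β γ G ρ hρ h Ψp hΨ
end

section
/- For every k ∈ ℤ, the dual adapted basis elements satisfy the recursion Ψ⁻_{k+1} = R₋ Ψ⁻_k. -/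
open Polynomial

/-!
Since `D` acts diagonally, `(R₋ f)_n = γ G(-β(n-1)) f_{n-1}`. Applied to `Ψ⁻_k`, the factor
`h̄_{(n-1)-k} = h̄_{n-(k+1)}` is just carried along, while the multiplier turns `ρ_{1-n}⁻¹` into
`ρ_{-n}⁻¹`: this is the recursion `ρ_{1-n} = γ G((1-n)β) ρ_{-n}` read for inverses.
-/

lemma eulerD_smul_pow_coeff {R : Type*} [CommRing R] (b : R) (i : ℕ) (f : LaurentSeries R)
    (n : ℤ) : (((b • eulerD R) ^ i) f).coeff n = (b * n) ^ i * f.coeff n := by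
  induction i generalizing f with
  | zero => simp
  | succ i ih =>
    have hD : ((b • eulerD R) f).coeff n = b * n * f.coeff n := by
      show b • (n • f.coeff n) = _
      rw [zsmul_eq_mul, smul_eq_mul, mul_assoc]
    rw [pow_succ, Module.End.mul_apply, ih, hD]
    ring

lemma aeval_smul_eulerD_coeff {R : Type*} [CommRing R] (b : R) (p : R[X])
    (f : LaurentSeries R) (n : ℤ) :
    ((aeval (b • eulerD R) p) f).coeff n = p.eval (b * n) * f.coeff n := by
  induction p using Polynomial.induction_on' with
  | add p q hp hq =>
    rw [map_add, LinearMap.add_apply, HahnSeries.coeff_add, hp, hq, eval_add, add_mul]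
  | monomial i a =>
    rw [aeval_monomial, eval_monomial, Module.End.mul_apply, Module.algebraMap_end_apply,
      HahnSeries.coeff_smul, smul_eq_mul, eulerD_smul_pow_coeff, mul_assoc]

lemma mulX_coeff {R : Type*} [CommRing R] (f : LaurentSeries R) (n : ℤ) :
    (mulX R f).coeff n = f.coeff (n - 1) := by
  show (HahnSeries.single (1 : ℤ) (1 : R) * f).coeff n = _
  simpa using HahnSeries.coeff_single_mul_add (r := (1 : R)) (x := f) (a := n - 1) (b := 1)

lemma Rminus_coeff {R : Type*} [CommRing R] (β γ : R) (G : R[X]) (f : LaurentSeries R)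
    (n : ℤ) :
    (Rminus R β γ G f).coeff n = γ * G.eval ((-β) * ((n - 1 : ℤ) : R)) * f.coeff (n - 1) := by
  show (γ • mulX R (aeval ((-β) • eulerD R) G f)).coeff n = _
  rw [HahnSeries.coeff_smul, smul_eq_mul, mulX_coeff, aeval_smul_eulerD_coeff, mul_assoc]

lemma Units.val_inv_eq_mul_val_inv {M : Type*} [CommMonoid M] {u v : Mˣ} {c : M}
    (h : (v : M) = c * u) : ((u⁻¹ : Mˣ) : M) = c * ((v⁻¹ : Mˣ) : M) := by
  rw [Units.eq_mul_inv_iff_mul_eq, Units.inv_mul_eq_iff_eq_mul, h, mul_comm]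

theorem adapted_basis_minus_recursion_general (R : Type*) [CommRing R] (β γ : R) (G : R[X])
    (ρ : ℤ → Rˣ)
    (hρ : ∀ n : ℤ, (ρ n : R) = γ * G.eval ((n : R) * β) * (ρ (n - 1) : R))
    (hbar : ℤ → R)
    (Ψm : ℤ → LaurentSeries R)
    (hΨ : ∀ k n : ℤ, (Ψm k).coeff n = ((ρ (-n))⁻¹ : Rˣ) * hbar (n - k)) :
    ∀ k : ℤ, Ψm (k + 1) = Rminus R β γ G (Ψm k) := by
  intro k
  ext n
  have hρ_inv : ((ρ (-n))⁻¹ : Rˣ) = γ * G.eval ((-β) * ((n - 1 : ℤ) : R))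
      * ((ρ (-(n - 1)))⁻¹ : Rˣ) := by
    refine Units.val_inv_eq_mul_val_inv ?_
    rw [hρ, show -(n - 1) - 1 = -n by ring,
      show ((-(n - 1) : ℤ) : R) * β = -β * ((n - 1 : ℤ) : R) by push_cast; ring]
  rw [Rminus_coeff, hΨ, hΨ, hρ_inv, show n - (k + 1) = n - 1 - k by ring]
  ring

/-- the dual adapted basis elements `Ψ⁻_k`, with coefficients
`(Ψ⁻_k)_n = ρ_{−n}⁻¹ h̄_{n−k}`, satisfy the recursion `Ψ⁻_{k+1} = R₋ Ψ⁻_k`. -/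
theorem adapted_basis_minus_recursion (R : Type*) [CommRing R] (β γ : R) (G : R[X])
    (hG : G.coeff 0 = 1)
    (ρ : ℤ → Rˣ) (hρ0 : ρ 0 = 1)
    (hρ : ∀ n : ℤ, (ρ n : R) = γ * G.eval ((n : R) * β) * (ρ (n - 1) : R))
    (L : ℕ) (hL : 1 ≤ L) (s : ℕ → R)
    (hbar : ℤ → R) (hbar0 : hbar 0 = 1) (hbarneg : ∀ n : ℤ, n < 0 → hbar n = 0)
    (hbarrec : ∀ n : ℤ, 1 ≤ n →
      β * (n : R) * hbar n = -∑ k ∈ Finset.Icc 1 L, (k : R) * s k * hbar (n - (k : ℤ)))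
    (Ψm : ℤ → LaurentSeries R)
    (hΨ : ∀ k n : ℤ, (Ψm k).coeff n = ((ρ (-n))⁻¹ : Rˣ) * hbar (n - k)) :
    ∀ k : ℤ, Ψm (k + 1) = Rminus R β γ G (Ψm k) :=
  adapted_basis_minus_recursion_general R β γ G ρ hρ hbar Ψm hΨ
end

section
/- For all k, m ∈ ℤ, the adapted bases are dual with respect to the residue pairing: (Ψ⁺_k, Ψ⁻_m) = γ if k + m = 1 and (Ψ⁺_k, Ψ⁻_m) = 0 otherwise, where (f, g) denotes the coefficient of x¹ in the product f·g of formal Laurent series (formally (f,g) = (1/2πi)∮ f(x)g(x) dx/x²). In particular every Ψ⁺_k with k ≤ 0 is orthogonal to every Ψ⁻_l with l ≤ 0. -/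
/-! The factor `ρ_{n-1}` of `[xⁿ] Ψ⁺_k` cancels against the factor `ρ_{n-1}⁻¹` of
`[x¹⁻ⁿ] Ψ⁻_m`, so `(Ψ⁺_k, Ψ⁻_m)` is `γ` times the coefficient of `x^{1-k-m}` in `H · H̄ = 1`. -/

open Polynomial

open Finset

theorem LaurentSeries.coeff_mul_eq_sum_Icc {R : Type*} [NonUnitalNonAssocSemiring R]
    {f g : LaurentSeries R} {a b : ℤ} (hf : ∀ n < a, f.coeff n = 0)
    (hg : ∀ n < b, g.coeff n = 0) (N : ℤ) :
    (f * g).coeff N = ∑ i ∈ Icc a (N - b), f.coeff i * g.coeff (N - i) := by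
  classical
  have hinj : Set.InjOn (fun i : ℤ => (i, N - i)) (Icc a (N - b)) :=
    fun i _ j _ hij => congrArg Prod.fst hij
  rw [HahnSeries.coeff_mul,
    ← sum_image (f := fun ij : ℤ × ℤ => f.coeff ij.1 * g.coeff ij.2) hinj]
  refine sum_subset (fun ij hij => ?_) (fun ij hij_image hij => ?_)
  · obtain ⟨hi, hj, hsum⟩ := mem_antidiagonal.mp hij
    have ha : a ≤ ij.1 := not_lt.mp (mt (hf ij.1) hi)
    have hb : b ≤ ij.2 := not_lt.mp (mt (hg ij.2) hj)
    exact mem_image.mpr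
      ⟨ij.1, mem_Icc.mpr ⟨ha, by omega⟩, Prod.ext rfl (show N - ij.1 = ij.2 by omega)⟩
  · obtain ⟨i, -, rfl⟩ := mem_image.mp hij_image
    by_contra hne
    exact hij (mem_antidiagonal.mpr
      ⟨left_ne_zero_of_mul hne, right_ne_zero_of_mul hne, add_sub_cancel i N⟩)

theorem Finset.sum_Icc_sub_eq_sum_Icc_zero {M : Type*} [AddCommMonoid M]
    (φ : ℤ → ℤ → M) (k l : ℤ) :
    ∑ i ∈ Icc k l, φ (i - k) (l - i) = ∑ j ∈ Icc 0 (l - k), φ j (l - k - j) := by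
  have hshift : Icc k l = (Icc 0 (l - k)).map (addLeftEmbedding k) := by
    rw [map_add_left_Icc, add_zero, add_sub_cancel]
  rw [hshift, sum_map]
  refine sum_congr rfl fun j _ => ?_
  simp only [addLeftEmbedding_apply, add_sub_cancel_left, sub_add_eq_sub_sub]

theorem sum_Icc_mul_eq_ite_of_convolution_inverse {R : Type*} [CommRing R] {h hbar : ℤ → R}
    (hconv : ∀ n : ℤ, 0 ≤ n →
      ∑ j ∈ Icc 0 n, h j * hbar (n - j) = if n = 0 then 1 else 0)
    (k l : ℤ) : ∑ i ∈ Icc k l, h (i - k) * hbar (l - i) = if l = k then 1 else 0 := by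
  rw [sum_Icc_sub_eq_sum_Icc_zero (fun i j => h i * hbar j)]
  rcases le_or_gt k l with hkl | hlk
  · simp only [hconv (l - k) (by omega), sub_eq_zero]
  · rw [Icc_eq_empty (by omega), sum_empty, if_neg hlk.ne]

theorem adapted_basis_duality_general (R : Type*) [CommRing R] (γ : R)
    (ρ : ℤ → Rˣ)
    (h hbar : ℤ → R)
    (hneg : ∀ n : ℤ, n < 0 → h n = 0) (hbarneg : ∀ n : ℤ, n < 0 → hbar n = 0)
    (hconv : ∀ n : ℤ, 0 ≤ n →
      ∑ j ∈ Finset.Icc 0 n, h j * hbar (n - j) = if n = 0 then 1 else 0)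
    (Ψp Ψm : ℤ → LaurentSeries R)
    (hΨp : ∀ k n : ℤ, (Ψp k).coeff n = γ * (ρ (n - 1) : R) * h (n - k))
    (hΨm : ∀ k n : ℤ, (Ψm k).coeff n = ((ρ (-n))⁻¹ : Rˣ) * hbar (n - k)) :
    (∀ k m : ℤ, (Ψp k * Ψm m).coeff 1 = if k + m = 1 then γ else 0) ∧
    (∀ k l : ℤ, k ≤ 0 → l ≤ 0 → (Ψp k * Ψm l).coeff 1 = 0) := by
  have duality (k m : ℤ) : (Ψp k * Ψm m).coeff 1 = if k + m = 1 then γ else 0 := by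
    have hterm (i : ℤ) : (Ψp k).coeff i * (Ψm m).coeff (1 - i)
        = γ * (h (i - k) * hbar (1 - m - i)) := by
      rw [hΨp, hΨm, neg_sub, sub_right_comm]
      linear_combination γ * h (i - k) * hbar (1 - m - i) * Units.mul_inv (ρ (i - 1))
    rw [LaurentSeries.coeff_mul_eq_sum_Icc (a := k) (b := m)
        (fun n hn => by rw [hΨp, hneg _ (by omega), mul_zero])
        (fun n hn => by rw [hΨm, hbarneg _ (by omega), mul_zero]),
      sum_congr rfl fun i _ => hterm i, ← mul_sum,
      sum_Icc_mul_eq_ite_of_convolution_inverse hconv]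
    simp only [show (1 - m = k) ↔ (k + m = 1) by omega, mul_ite, mul_one, mul_zero]
  exact ⟨duality, fun k l hk hl => by rw [duality, if_neg (by omega)]⟩

/-- duality of the adapted bases under the residue pairing
`(f, g) := [x¹] (f·g)`: one has `(Ψ⁺_k, Ψ⁻_m) = γ δ_{k+m,1}`; in particular each
`Ψ⁺_k` with `k ≤ 0` is orthogonal to each `Ψ⁻_l` with `l ≤ 0`. -/
theorem adapted_basis_duality (R : Type*) [CommRing R] (β γ : R) (G : R[X])
    (hG : G.coeff 0 = 1)
    (ρ : ℤ → Rˣ) (hρ0 : ρ 0 = 1)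
    (hρ : ∀ n : ℤ, (ρ n : R) = γ * G.eval ((n : R) * β) * (ρ (n - 1) : R))
    (h hbar : ℤ → R) (h0 : h 0 = 1) (hbar0 : hbar 0 = 1)
    (hneg : ∀ n : ℤ, n < 0 → h n = 0) (hbarneg : ∀ n : ℤ, n < 0 → hbar n = 0)
    (hconv : ∀ n : ℤ, 0 ≤ n →
      ∑ j ∈ Finset.Icc 0 n, h j * hbar (n - j) = if n = 0 then 1 else 0)
    (Ψp Ψm : ℤ → LaurentSeries R)
    (hΨp : ∀ k n : ℤ, (Ψp k).coeff n = γ * (ρ (n - 1) : R) * h (n - k))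
    (hΨm : ∀ k n : ℤ, (Ψm k).coeff n = ((ρ (-n))⁻¹ : Rˣ) * hbar (n - k)) :
    (∀ k m : ℤ, (Ψp k * Ψm m).coeff 1 = if k + m = 1 then γ else 0) ∧
    (∀ k l : ℤ, k ≤ 0 → l ≤ 0 → (Ψp k * Ψm l).coeff 1 = 0) :=
  adapted_basis_duality_general R γ ρ h hbar hneg hbarneg hconv Ψp Ψm hΨp hΨm
end

section
/- For every k ∈ ℤ the adapted basis satisfies the constant-coefficient linear differential relation β•(D Ψ⁺_k) = k β • Ψ⁺_k + Σ_{m=1}^L m s_m Ψ⁺_{k+m}. (This is the componentwise form of the infinite system β D Ψ⃗⁺ = P⁺ Ψ⃗⁺, where the constant matrix P⁺ is upper triangular with diagonal entries P⁺_{kk} = kβ and entries P⁺_{kj} = (j−k) s_{j−k} above the diagonal.) -/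
open Polynomial

/-! Since `Ψ⁺_k` has coefficients `γ ρ_{n-1} h_{n-k}`, the Euler operator acts on it by
`n = k + (n - k)`; the part `k` gives the diagonal term and the part `n - k` is turned
into the off-diagonal terms by the recurrence for `h` at index `n - k`. -/

@[simp]
theorem eulerD_coeff {R : Type*} [CommRing R] (f : LaurentSeries R) (n : ℤ) :
    (eulerD R f).coeff n = n • f.coeff n :=
  rfl

/-- For `n ≤ 0` both sides vanish, since every shift `n - k` with `k ≥ 1` is negative. -/
theorem recurrence_of_one_le {R : Type*} [CommRing R] (β : R) (L : ℕ) (s : ℕ → R)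
    (h : ℤ → R) (hneg : ∀ n : ℤ, n < 0 → h n = 0)
    (hrec : ∀ n : ℤ, 1 ≤ n →
      β * (n : R) * h n = ∑ k ∈ Finset.Icc 1 L, (k : R) * s k * h (n - (k : ℤ)))
    (n : ℤ) : β * (n : R) * h n = ∑ k ∈ Finset.Icc 1 L, (k : R) * s k * h (n - (k : ℤ)) := by
  rcases le_or_gt 1 n with hn | hn
  · exact hrec n hn
  have hrhs : ∑ k ∈ Finset.Icc 1 L, (k : R) * s k * h (n - (k : ℤ)) = 0 :=
    Finset.sum_eq_zero fun k hk => by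
      rw [hneg _ (by have := (Finset.mem_Icc.mp hk).1; omega), mul_zero]
  rcases (show n ≤ 0 by omega).lt_or_eq with hn | rfl
  · rw [hrhs, hneg n hn, mul_zero]
  · rw [hrhs]; simp

theorem eulerD_eq_of_coeff_eq_mul_shift {R : Type*} [CommRing R] (β : R) (L : ℕ) (s : ℕ → R)
    (c h : ℤ → R)
    (hrec : ∀ n : ℤ, β * (n : R) * h n = ∑ k ∈ Finset.Icc 1 L, (k : R) * s k * h (n - (k : ℤ)))
    (Ψ : ℤ → LaurentSeries R) (hΨ : ∀ k n : ℤ, (Ψ k).coeff n = c n * h (n - k)) (k : ℤ) :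
    β • eulerD R (Ψ k) =
      ((k : R) * β) • Ψ k + ∑ m ∈ Finset.Icc 1 L, ((m : R) * s m) • Ψ (k + (m : ℤ)) := by
  ext n
  have hshift := hrec (n - k)
  simp only [Int.cast_sub, sub_sub] at hshift
  simp only [HahnSeries.coeff_add, HahnSeries.coeff_sum, HahnSeries.coeff_smul, eulerD_coeff,
    hΨ, smul_eq_mul, zsmul_eq_mul]
  calc β * ((n : R) * (c n * h (n - k)))
      = (k : R) * β * (c n * h (n - k)) + c n * (β * ((n : R) - k) * h (n - k)) := by ring
    _ = (k : R) * β * (c n * h (n - k)) +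
          ∑ m ∈ Finset.Icc 1 L, (m : R) * s m * (c n * h (n - (k + m))) := by
      rw [hshift, Finset.mul_sum]
      exact congrArg _ (Finset.sum_congr rfl fun _ _ => by ring)

theorem adapted_basis_plus_differential_system_general (R : Type*) [CommRing R] (β γ : R)
    (ρ : ℤ → Rˣ)
    (L : ℕ) (s : ℕ → R)
    (h : ℤ → R) (hneg : ∀ n : ℤ, n < 0 → h n = 0)
    (hrec : ∀ n : ℤ, 1 ≤ n →
      β * (n : R) * h n = ∑ k ∈ Finset.Icc 1 L, (k : R) * s k * h (n - (k : ℤ)))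
    (Ψp : ℤ → LaurentSeries R)
    (hΨ : ∀ k n : ℤ, (Ψp k).coeff n = γ * (ρ (n - 1) : R) * h (n - k)) :
    ∀ k : ℤ, β • (eulerD R (Ψp k)) =
      ((k : R) * β) • Ψp k +
        ∑ m ∈ Finset.Icc 1 L, ((m : R) * s m) • Ψp (k + (m : ℤ)) :=
  eulerD_eq_of_coeff_eq_mul_shift β L s (fun n => γ * (ρ (n - 1) : R)) h
    (recurrence_of_one_le β L s h hneg hrec) Ψp hΨ

/-- the constant-coefficient linear differential system
`β • (D Ψ⁺_k) = kβ • Ψ⁺_k + Σ_{m=1}^L m s_m Ψ⁺_{k+m}` (componentwise form of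
`β D Ψ⃗⁺ = P⁺ Ψ⃗⁺`). -/
theorem adapted_basis_plus_differential_system (R : Type*) [CommRing R] (β γ : R) (G : R[X])
    (hG : G.coeff 0 = 1)
    (ρ : ℤ → Rˣ) (hρ0 : ρ 0 = 1)
    (hρ : ∀ n : ℤ, (ρ n : R) = γ * G.eval ((n : R) * β) * (ρ (n - 1) : R))
    (L : ℕ) (hL : 1 ≤ L) (s : ℕ → R)
    (h : ℤ → R) (h0 : h 0 = 1) (hneg : ∀ n : ℤ, n < 0 → h n = 0)
    (hrec : ∀ n : ℤ, 1 ≤ n →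
      β * (n : R) * h n = ∑ k ∈ Finset.Icc 1 L, (k : R) * s k * h (n - (k : ℤ)))
    (Ψp : ℤ → LaurentSeries R)
    (hΨ : ∀ k n : ℤ, (Ψp k).coeff n = γ * (ρ (n - 1) : R) * h (n - k)) :
    ∀ k : ℤ, β • (eulerD R (Ψp k)) =
      ((k : R) * β) • Ψp k +
        ∑ m ∈ Finset.Icc 1 L, ((m : R) * s m) • Ψp (k + (m : ℤ)) :=
  adapted_basis_plus_differential_system_general R β γ ρ L s h hneg hrec Ψp hΨ
end

section
/- Let μ = (μ_1 ≥ μ_2 ≥ … ≥ μ_ℓ > 0) be a partition with ℓ parts and let N ≥ μ_1. Then the evaluation at t = 0 (all variables t_j set to 0) of the n-fold composite ∇_N(x_1) ∘ ∇_N(x_2) ∘ ⋯ ∘ ∇_N(x_n) applied to p_μ equals Σ_{σ ∈ S_n} ∏_{k=1}^{n} μ_k x_{σ(k)}^{μ_k − 1} if ℓ = n, and equals 0 if ℓ ≠ n (equivalently, it equals δ_{ℓ(μ),n} · |aut(μ)| · ∂^n m_μ(x_1,…,x_n)/∂x_1⋯∂x_n, where m_μ is the monomial symmetric polynomial). -/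
/-!
Each `∇_N(x)` is a derivation, and it sends the linear factor `μ_k t_{μ_k}` of `p_μ` to the
constant `μ_k x^{μ_k - 1}` as long as `μ_k ≤ N`. Applying `n` such derivations to a product of
`ℓ` linear factors therefore yields a sum over injections `e : Fin n ↪ Fin ℓ` (the `i`-th
derivation hits factor `e i`), each term keeping the factors outside the image of `e`.
Setting `t = 0` kills every term with a surviving factor, so only `ℓ = n` contributes, and
then the injections are the permutations and the sum is a permanent.
-/

open MvPolynomial

/-- The truncated current operator `∇_N(x) = Σ_{j=1}^N x^{j-1} ∂/∂t_j` on the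
polynomial ring `R[t_1, t_2, …]` (variables indexed by positive naturals). -/
noncomputable def nablaOp (R : Type*) [CommRing R] (N : ℕ) (x : R) :
    Module.End R (MvPolynomial ℕ R) :=
  ∑ j ∈ Finset.Icc 1 N, x ^ (j - 1) • (MvPolynomial.pderiv j).toLinearMap

/-- The power-sum monomial `p_μ = ∏_k μ_k t_{μ_k}` for a partition with parts
`μ 0, …, μ (ℓ-1)`. -/
noncomputable def powerSumMonomial (R : Type*) [CommRing R] (ℓ : ℕ) (μ : ℕ → ℕ) :
    MvPolynomial ℕ R :=
  ∏ k ∈ Finset.range ℓ, (MvPolynomial.C (μ k : R) * MvPolynomial.X (μ k))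

open Finset

theorem Derivation.leibniz_finset_prod {ι R A M : Type*} [CommSemiring R] [CommSemiring A]
    [Algebra R A] [AddCommMonoid M] [Module A M] [Module R M] [DecidableEq ι]
    (D : Derivation R A M) (s : Finset ι) (f : ι → A) :
    D (∏ i ∈ s, f i) = ∑ i ∈ s, (∏ j ∈ s.erase i, f j) • D (f i) := by
  induction s using Finset.induction_on with
  | empty => simp
  | insert a s ha ih =>
    rw [prod_insert ha, leibniz, ih, sum_insert ha, erase_insert ha, smul_sum, add_comm]
    congr 1
    refine sum_congr rfl fun i hi => ?_
    rw [erase_insert_of_ne (ne_of_mem_of_not_mem hi ha).symm, prod_insert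
      (fun h => ha (mem_of_mem_erase h)), mul_smul]

theorem Equiv.univ_map_embeddingFinSucc_symm {ι : Type*} [DecidableEq ι] {n : ℕ}
    (e : Fin n ↪ ι) (k : {k // k ∉ Set.range e}) :
    univ.map ((Equiv.embeddingFinSucc n ι).symm ⟨e, k⟩) = insert k.1 (univ.map e) := by
  ext j
  simp [Fin.exists_fin_succ, eq_comm]

section

variable {R A ι : Type*} [CommSemiring R] [CommSemiring A] [Algebra R A]
  [Fintype ι] [DecidableEq ι]

theorem list_prod_derivation_apply_prod {n : ℕ} (D : Fin n → Derivation R A A) (L : ι → A)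
    (a : Fin n → ι → R) (hD : ∀ i k, D i (L k) = algebraMap R A (a i k)) :
    (List.ofFn fun i => (D i : Module.End R A)).prod (∏ k, L k) =
      ∑ e : Fin n ↪ ι, (∏ i, a i (e i)) • ∏ k ∈ (univ.map e)ᶜ, L k := by
  induction n with
  | zero => simp
  | succ n ih =>
    rw [List.ofFn_succ, List.prod_cons, Module.End.mul_apply,
      ih (fun i => D i.succ) (fun i => a i.succ) (fun i => hD i.succ), map_sum,
      ← (Equiv.embeddingFinSucc n ι).symm.sum_comp, Fintype.sum_sigma]
    refine sum_congr rfl fun e _ => ?_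
    rw [LinearMap.map_smul, Derivation.coeFn_coe, Derivation.leibniz_finset_prod,
      smul_sum, sum_subtype _ (p := (· ∉ Set.range e)) (by simp)]
    refine sum_congr rfl fun k _ => ?_
    rw [Equiv.univ_map_embeddingFinSucc_symm, compl_insert, hD, smul_eq_mul, ← Algebra.commutes,
      ← Algebra.smul_def, smul_smul, Fin.prod_univ_succ]
    simp [mul_comm]

theorem algHom_list_prod_derivation_apply_prod {n : ℕ} (φ : A →ₐ[R] R)
    (D : Fin n → Derivation R A A) (L : ι → A) (a : Fin n → ι → R)
    (hD : ∀ i k, D i (L k) = algebraMap R A (a i k)) (hL : ∀ k, φ (L k) = 0) :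
    φ ((List.ofFn fun i => (D i : Module.End R A)).prod (∏ k, L k)) =
      if Fintype.card ι = n then ∑ e : Fin n ↪ ι, ∏ i, a i (e i) else 0 := by
  have hsurj (e : Fin n ↪ ι) : (univ.map e)ᶜ = ∅ ↔ Fintype.card ι = n := by
    rw [compl_eq_empty_iff, ← card_eq_iff_eq_univ, card_map, card_univ, Fintype.card_fin, eq_comm]
  rw [list_prod_derivation_apply_prod D L a hD, map_sum]
  split_ifs with hcard
  · refine sum_congr rfl fun e _ => ?_
    rw [(hsurj e).2 hcard, prod_empty, map_smul, map_one, smul_eq_mul, mul_one]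
  · refine sum_eq_zero fun e _ => ?_
    obtain ⟨k, hk⟩ := nonempty_iff_ne_empty.2 (mt (hsurj e).1 hcard)
    rw [map_smul, map_prod, prod_eq_zero hk (hL k), smul_zero]

end

theorem Matrix.sum_embedding_prod_eq_permanent {ι R : Type*} [Fintype ι] [DecidableEq ι]
    [CommSemiring R] (M : Matrix ι ι R) : ∑ e : ι ↪ ι, ∏ i, M i (e i) = M.permanent := by
  rw [← permanent_transpose, permanent, ← (Equiv.embeddingEquivOfFinite ι).symm.sum_comp]
  rfl

noncomputable def nablaDerivation (R : Type*) [CommRing R] (N : ℕ) (x : R) :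
    Derivation R (MvPolynomial ℕ R) (MvPolynomial ℕ R) :=
  ∑ j ∈ Icc 1 N, x ^ (j - 1) • pderiv j

theorem coe_nablaDerivation (R : Type*) [CommRing R] (N : ℕ) (x : R) :
    (nablaDerivation R N x : Module.End R (MvPolynomial ℕ R)) = nablaOp R N x := by
  refine LinearMap.ext fun p => ?_
  rw [Derivation.coeFn_coe, nablaOp, LinearMap.sum_apply, nablaDerivation,
    ← Derivation.coeFnAddMonoidHom_apply, map_sum, Finset.sum_apply]
  rfl

theorem nablaDerivation_X {R : Type*} [CommRing R] {N j : ℕ} (x : R) (hj : j ∈ Icc 1 N) :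
    nablaDerivation R N x (X j) = C (x ^ (j - 1)) := by
  rw [nablaDerivation, ← Derivation.coeFnAddMonoidHom_apply, map_sum, Finset.sum_apply,
    sum_eq_single_of_mem j hj fun i _ hij => ?_]
  · simp [pderiv_X, smul_eq_C_mul]
  · simp [pderiv_X, Ne.symm hij]

theorem nablaDerivation_C_mul_X {R : Type*} [CommRing R] {N j : ℕ} (x : R) (hj : j ≤ N) :
    nablaDerivation R N x (C (j : R) * X j) = C ((j : R) * x ^ (j - 1)) := by
  rcases Nat.eq_zero_or_pos j with rfl | hj0
  · simp
  rw [← smul_eq_C_mul, Derivation.map_smul, nablaDerivation_X x (mem_Icc.2 ⟨hj0, hj⟩),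
    smul_eq_C_mul, C_mul]

theorem nabla_on_power_sum_general (R : Type*) [CommRing R] (n : ℕ) (x : Fin n → R)
    (ℓ : ℕ) (μ : ℕ → ℕ) (N : ℕ)
    (hN : ∀ k < ℓ, μ k ≤ N) :
    MvPolynomial.eval (fun _ => (0 : R))
        (((List.ofFn fun i : Fin n => nablaOp R N (x i)).prod)
          (powerSumMonomial R ℓ μ)) =
      if ℓ = n then
        ∑ σ : Equiv.Perm (Fin n), ∏ k : Fin n,
          (μ (k : ℕ) : R) * x (σ k) ^ (μ (k : ℕ) - 1)
      else 0 := by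
  have hD (i : Fin n) (k : Fin ℓ) : nablaDerivation R N (x i) (C (μ k : R) * X (μ k)) =
      algebraMap R _ ((μ k : R) * x i ^ (μ k - 1)) :=
    nablaDerivation_C_mul_X _ (hN k k.2)
  have hL (k : Fin ℓ) : aeval (fun _ => (0 : R)) (C (μ k : R) * X (μ k)) = 0 := by simp
  have hcoeff := algHom_list_prod_derivation_apply_prod _ _ _ _ hD hL
  simp only [coe_nablaDerivation, aeval_eq_eval, Fintype.card_fin] at hcoeff
  rw [powerSumMonomial, prod_range, hcoeff]
  split_ifs with h
  · subst h
    exact Matrix.sum_embedding_prod_eq_permanent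
      (Matrix.of fun i k : Fin ℓ => (μ k : R) * x i ^ (μ k - 1))
  · rfl

/-- evaluation at `t = 0` of `∇_N(x_1) ∘ ⋯ ∘ ∇_N(x_n)` applied to `p_μ`
equals `Σ_{σ ∈ S_n} ∏_k μ_k x_{σ(k)}^{μ_k − 1}` if `ℓ(μ) = n`, and `0` otherwise. -/
theorem nabla_on_power_sum (R : Type*) [CommRing R] (n : ℕ) (x : Fin n → R)
    (ℓ : ℕ) (μ : ℕ → ℕ) (N : ℕ)
    (hpos : ∀ k < ℓ, 0 < μ k)
    (hmono : ∀ i j, i ≤ j → j < ℓ → μ j ≤ μ i)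
    (hN : ∀ k < ℓ, μ k ≤ N) :
    MvPolynomial.eval (fun _ => (0 : R))
        (((List.ofFn fun i : Fin n => nablaOp R N (x i)).prod)
          (powerSumMonomial R ℓ μ)) =
      if ℓ = n then
        ∑ σ : Equiv.Perm (Fin n), ∏ k : Fin n,
          (μ (k : ℕ) : R) * x (σ k) ^ (μ (k : ℕ) - 1)
      else 0 :=
  nabla_on_power_sum_general R n x ℓ μ N hN
end
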